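/- Fix a positive integer ρ and set α_n = β_{(n,ρn)} for n ≥ 1. Then α_{n+m} ≥ α_n · α_m for all positive integers n and m (the sequence is supermultiplicative). -/

import Mathlib

open MeasureTheory Filter

/-- An edge of the square lattice `ℤ × ℤ`, encoded by its lower-left endpoint `base`
together with its direction: a horizontal edge joins `base` to `base + (1,0)`,
a vertical edge joins `base` to `base + (0,1)`. This encodes exactly the set
`𝔼` of nearest-neighbour edges of `ℤ²`. -/
structure LatticeEdge where
  base : ℤ × ℤ
  horiz : Bool
deriving DecidableEq

namespace LatticeEdge

/-- First endpoint of an edge. -/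
def fst (e : LatticeEdge) : ℤ × ℤ := e.base

/-- Second endpoint of an edge. -/
def snd (e : LatticeEdge) : ℤ × ℤ :=
  if e.horiz then (e.base.1 + 1, e.base.2) else (e.base.1, e.base.2 + 1)

/-- The two endpoints of an edge, as an unordered pair. -/
def ends (e : LatticeEdge) : Sym2 (ℤ × ℤ) := s(e.fst, e.snd)

end LatticeEdge

/-- The graph on `ℤ²` whose edges are the lattice edges belonging to `S`. -/
def graphOf (S : Set LatticeEdge) : SimpleGraph (ℤ × ℤ) where
  Adj u v := u ≠ v ∧ ∃ e ∈ S, e.ends = s(u, v)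
  symm := by
    constructor
    intro u v h
    obtain ⟨hne, e, he, hs⟩ := h
    exact ⟨hne.symm, e, he, hs.trans (Sym2.eq_swap)⟩
  loopless := by
    constructor
    intro u h
    exact h.1 rfl

/-- The graph `(ℤ², 𝔼 ∖ γ)` obtained by deleting the edges of `γ`. -/
def complGraph (γ : Finset LatticeEdge) : SimpleGraph (ℤ × ℤ) :=
  graphOf {e | e ∉ γ}

/-- A finite set `γ` of lattice edges is a *contour* if the graph `(ℤ², 𝔼 ∖ γ)` has
exactly one finite connected component, and `γ` is minimal with this property:
for every `e ∈ γ`, the graph `(ℤ², 𝔼 ∖ (γ ∖ {e}))` has no finite connected component. -/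
def IsContour (γ : Finset LatticeEdge) : Prop :=
  (∃! C : (complGraph γ).ConnectedComponent, C.supp.Finite) ∧
  ∀ e ∈ γ, ∀ C : (graphOf {f | f ∉ γ ∨ f = e}).ConnectedComponent, ¬ C.supp.Finite

/-- A contour `γ` *surrounds* a set `X ⊆ ℤ²` of vertices if `X` is contained in the
vertex set `I_γ` of the (unique) finite connected component of `(ℤ², 𝔼 ∖ γ)`. -/
def Surrounds (γ : Finset LatticeEdge) (X : Set (ℤ × ℤ)) : Prop :=
  IsContour γ ∧ ∃ C : (complGraph γ).ConnectedComponent, C.supp.Finite ∧ X ⊆ C.supp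

/-- `Γ^n_X` : the set of contours of cardinality `n` surrounding `X`. -/
def GammaN (X : Set (ℤ × ℤ)) (n : ℕ) : Set (Finset LatticeEdge) :=
  {γ | Surrounds γ X ∧ γ.card = n}

/-- `‖x‖ = 2(x₁ + x₂ + 2)`, the cardinality of a minimal contour surrounding `{0, x}`. -/
def normC (x : ℤ × ℤ) : ℕ := (2 * (x.1 + x.2 + 2)).toNat

/-- `β_x` : the number of minimal contours surrounding `{0, x}`. -/
noncomputable def betaX (x : ℤ × ℤ) : ℕ := Nat.card ↥(GammaN {0, x} (normC x))

/-- Number of horizontal edges of `γ`, i.e. `|γ ∩ 𝔼ʰ|`. -/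
def hCount (γ : Finset LatticeEdge) : ℕ := (γ.filter fun e => e.horiz = true).card

/-- Number of vertical edges of `γ`, i.e. `|γ ∩ 𝔼ᵛ|`. -/
def vCount (γ : Finset LatticeEdge) : ℕ := (γ.filter fun e => e.horiz = false).card

/-- The dual edge `e*` of a lattice edge `e`.  We identify the dual lattice
`ℤ² + (1/2, 1/2)` with `ℤ²` via `(a,b) ↦ (a + 1/2, b + 1/2)`; under this
identification the dual edge crossing the horizontal edge `(a,b)–(a+1,b)` joins
`(a, b-1)` to `(a, b)` (a vertical dual edge), and the dual edge crossing the
vertical edge `(a,b)–(a,b+1)` joins `(a-1, b)` to `(a, b)` (a horizontal dual edge). -/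
def dualEdge (e : LatticeEdge) : LatticeEdge :=
  if e.horiz then ⟨(e.base.1, e.base.2 - 1), false⟩ else ⟨(e.base.1 - 1, e.base.2), true⟩

/-- A finite set `S` of (dual) lattice edges is a *circuit* if it is the edge set of a
closed self-avoiding path: there are `n ≥ 3` distinct vertices `c 0, …, c (n-1)`,
cyclically consecutive ones being joined by an edge of `S`, and every edge of `S` arising
this way. -/
def IsCircuit (S : Finset LatticeEdge) : Prop :=
  ∃ n : ℕ, 3 ≤ n ∧ ∃ c : ZMod n → ℤ × ℤ, Function.Injective c ∧
    (∀ i : ZMod n, ∃ e ∈ S, e.ends = s(c i, c (i + 1))) ∧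
    (∀ e ∈ S, ∃ i : ZMod n, e.ends = s(c i, c (i + 1)))

/-- The dual edge `e_k*` joining `(k - 1/2, -1/2)` to `(k - 1/2, 1/2)`; in our
identification of the dual lattice with `ℤ²` this is the vertical dual edge with base
`(k-1, -1)`, i.e. the dual of the horizontal edge `(k-1, 0)–(k, 0)`. -/
def ekStar (k : ℤ) : LatticeEdge := ⟨(k - 1, -1), false⟩

/-- The probability that the edge `e` is open: `p_h` for horizontal edges and `p_v`
for vertical ones. -/
noncomputable def edgeProb (ph pv : ℝ) (e : LatticeEdge) : ℝ := if e.horiz then ph else pv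

/-- `P` is the Bernoulli product measure `P_{(p_h, p_v)}` on configurations
`ω ∈ {0,1}^𝔼` (encoded as `LatticeEdge → Bool`, `true` = open): it is a probability
measure and, for every finite set of edges, the states of those edges are independent
Bernoulli variables with the correct parameters.  These cylinder probabilities
characterize the product measure uniquely. -/
def IsBernoulliProduct (ph pv : ℝ) (P : Measure (LatticeEdge → Bool)) : Prop :=
  IsProbabilityMeasure P ∧
    ∀ (F : Finset LatticeEdge) (σ : LatticeEdge → Bool),
      P {ω | ∀ e ∈ F, ω e = σ e} =
        ∏ e ∈ F, ENNReal.ofReal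
          (if σ e then edgeProb ph pv e else 1 - edgeProb ph pv e)

/-- The graph of open edges of the configuration `ω`. -/
def openGraph (ω : LatticeEdge → Bool) : SimpleGraph (ℤ × ℤ) :=
  graphOf {e | ω e = true}

/-- `x` and `y` belong to the same finite open cluster of the configuration `ω`. -/
def SameFiniteCluster (ω : LatticeEdge → Bool) (x y : ℤ × ℤ) : Prop :=
  ∃ C : (openGraph ω).ConnectedComponent, x ∈ C.supp ∧ y ∈ C.supp ∧ C.supp.Finite

/-- The truncated (finite) connectivity `τ^f_p(x,y)`: the probability that `x` and `y`
belong to the same finite open cluster. -/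
noncomputable def tauF (P : Measure (LatticeEdge → Bool)) (x y : ℤ × ℤ) : ℝ :=
  (P {ω | SameFiniteCluster ω x y}).toReal

/-- The box `V_N = ([-N,N] × [-N,N]) ∩ ℤ²`. -/
def VN (N : ℕ) : Set (ℤ × ℤ) := {v | |v.1| ≤ (N : ℤ) ∧ |v.2| ≤ (N : ℤ)}

/-- The interior vertex boundary `∂_v^int V_N = {x ∈ V_N : d(x, ℤ² ∖ V_N) = 1}`. -/
def intBdry (N : ℕ) : Set (ℤ × ℤ) :=
  {v | (|v.1| ≤ (N : ℤ) ∧ |v.2| ≤ (N : ℤ)) ∧ (|v.1| = (N : ℤ) ∨ |v.2| = (N : ℤ))}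

/-- `e ∈ E_N`: both endpoints of `e` lie in `V_N`. -/
def edgeInBox (N : ℕ) (e : LatticeEdge) : Prop := e.fst ∈ VN N ∧ e.snd ∈ VN N

/-- The graph on `(V_N, open edges of E_N)` (vertices outside `V_N` are isolated). -/
def openGraphN (N : ℕ) (ω : LatticeEdge → Bool) : SimpleGraph (ℤ × ℤ) :=
  graphOf {e | edgeInBox N e ∧ ω e = true}

/-- The finite-volume event defining `τ^{f,N}_p(x,y)`: there is an open cluster `A` of
`(V_N, open edges of E_N)` with `{x,y} ⊆ V_A` and `V_A ∩ ∂_v^int V_N = ∅`. -/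
def FiniteVolEvent (N : ℕ) (x y : ℤ × ℤ) (ω : LatticeEdge → Bool) : Prop :=
  ∃ C : (openGraphN N ω).ConnectedComponent,
    x ∈ C.supp ∧ y ∈ C.supp ∧ C.supp ∩ intBdry N = ∅

/-- The finite-volume finite connectivity `τ^{f,N}_p(x,y)`. -/
noncomputable def tauFN (P : Measure (LatticeEdge → Bool)) (N : ℕ) (x y : ℤ × ℤ) : ℝ :=
  (P {ω | FiniteVolEvent N x y ω}).toReal

/-- `λ = (1-p)/p`. -/
noncomputable def lam (p : ℝ) : ℝ := (1 - p) / p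

/-- The threshold `η̃(p_h, x₁, x₂)` from the paper. -/
noncomputable def etaTilde (ph : ℝ) (x1 x2 : ℤ) : ℝ :=
  ((betaX (x1, x2) : ℝ) * ph ^ (4 * (x1 + x2 + 2)) /
      ((4 ^ 3 * lam ph) ^ (x1 + x2 + 3) / (1 - 4 ^ 3 * lam ph) +
        (betaX (x1, x2) : ℝ) * (1 + 12 * lam ph) ^ (2 * (x1 + x2 + 2)))) ^
    (1 / (2 * ((x2 : ℝ) - (x1 : ℝ))))

/-!
A contour of the minimal length `‖x‖` around `{0, x}` is the edge boundary of its interior.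
Every nonempty row and column of the interior carries at least two boundary edges, and a walk
from `0` to `x` inside the interior meets every row `0, …, x₂` and column `0, …, x₁`; so the
length `2 (x₁ + 1) + 2 (x₂ + 1)` forces the interior to be a staircase polyomino spanning the
box `[0, x₁] × [0, x₂]`, and conversely the boundary of every such staircase is a minimal
contour. Thus `β_x` counts staircases from `0` to `x`. Placing a staircase for `y` with its origin
on the corner `x` of a staircase for `x` gives a staircase for `x + y` from which both pieces can
be read off again, so `β_x β_y ≤ β_{x+y}`; the sequence `α` is the case `x = (n, ρn)`,
`y = (m, ρm)`.
-/

lemma LatticeEdge.fst_ne_snd (e : LatticeEdge) : e.fst ≠ e.snd := by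
  obtain ⟨b, _ | _⟩ := e <;> simp [LatticeEdge.fst, LatticeEdge.snd, Prod.ext_iff]

namespace SimpleGraph

variable {V : Type*} {G : SimpleGraph V}

lemma mem_supp_connectedComponentMk_iff {u v : V} :
    v ∈ (G.connectedComponentMk u).supp ↔ G.Reachable v u := by
  rw [ConnectedComponent.mem_supp_iff, ConnectedComponent.eq]

lemma Reachable.mem_of_forall_adj {P : Set V} (hP : ∀ u v, G.Adj u v → u ∈ P → v ∈ P)
    {u v : V} (huv : G.Reachable u v) (hu : u ∈ P) : v ∈ P := by
  obtain ⟨w⟩ := huv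
  induction w with
  | nil => exact hu
  | cons hadj _ ih => exact ih (hP _ _ hadj hu)

/-- A discrete intermediate value theorem. -/
lemma Walk.exists_mem_darts_of_le_of_lt (f : V → ℤ) (hf : ∀ u v, G.Adj u v → f v ≤ f u + 1)
    {u v : V} (w : G.Walk u v) {k : ℤ} (hu : f u ≤ k) (hv : k < f v) :
    ∃ d ∈ w.darts, f d.fst = k ∧ f d.snd = k + 1 := by
  induction w with
  | nil => omega
  | @cons a b c hab w ih =>
    by_cases hb : f b ≤ k
    · obtain ⟨d, hd, h⟩ := ih hb hv
      exact ⟨d, List.mem_cons_of_mem _ hd, h⟩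
    · have := hf a b hab
      exact ⟨⟨(a, b), hab⟩, List.mem_cons_self, by simp only; omega, by simp only; omega⟩

end SimpleGraph

namespace MinimalContour

open Finset SimpleGraph

def horizEdge (p : ℤ × ℤ) : LatticeEdge := ⟨p, true⟩

def vertEdge (p : ℤ × ℤ) : LatticeEdge := ⟨p, false⟩

@[simp] lemma horizEdge_fst (p : ℤ × ℤ) : (horizEdge p).fst = p := rfl
@[simp] lemma horizEdge_snd (p : ℤ × ℤ) : (horizEdge p).snd = (p.1 + 1, p.2) := rfl
@[simp] lemma vertEdge_fst (p : ℤ × ℤ) : (vertEdge p).fst = p := rfl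
@[simp] lemma vertEdge_snd (p : ℤ × ℤ) : (vertEdge p).snd = (p.1, p.2 + 1) := rfl

lemma eq_horizEdge_or_eq_vertEdge (e : LatticeEdge) :
    e = horizEdge e.base ∨ e = vertEdge e.base := by
  obtain ⟨b, _ | _⟩ := e <;> simp [horizEdge, vertEdge]

lemma graphOf_adj_of_mem {S : Set LatticeEdge} {e : LatticeEdge} (he : e ∈ S) :
    (graphOf S).Adj e.fst e.snd :=
  ⟨e.fst_ne_snd, e, he, rfl⟩

lemma graphOf_adj_iff {S : Set LatticeEdge} {u v : ℤ × ℤ} :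
    (graphOf S).Adj u v ↔
      ∃ e ∈ S, (e.fst = u ∧ e.snd = v) ∨ (e.fst = v ∧ e.snd = u) := by
  refine ⟨fun ⟨_, e, he, hev⟩ => ⟨e, he, Sym2.eq_iff.1 hev⟩, fun ⟨e, he, h⟩ => ?_⟩
  refine ⟨?_, e, he, Sym2.eq_iff.2 h⟩
  rcases h with ⟨rfl, rfl⟩ | ⟨rfl, rfl⟩
  exacts [e.fst_ne_snd, e.fst_ne_snd.symm]

lemma graphOf_adj_cases {S : Set LatticeEdge} {u v : ℤ × ℤ} (h : (graphOf S).Adj u v) :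
    (v.1 = u.1 + 1 ∧ v.2 = u.2) ∨ (v.1 = u.1 ∧ v.2 = u.2 + 1) ∨
    (u.1 = v.1 + 1 ∧ u.2 = v.2) ∨ (u.1 = v.1 ∧ u.2 = v.2 + 1) := by
  obtain ⟨e, -, ⟨rfl, rfl⟩ | ⟨rfl, rfl⟩⟩ := graphOf_adj_iff.1 h <;>
    rcases eq_horizEdge_or_eq_vertEdge e with h | h <;> rw [h] <;> simp

lemma fst_le_add_one_of_adj {S : Set LatticeEdge} {u v : ℤ × ℤ} (h : (graphOf S).Adj u v) :
    v.1 ≤ u.1 + 1 := by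
  rcases graphOf_adj_cases h with h | h | h | h <;> omega

lemma snd_le_add_one_of_adj {S : Set LatticeEdge} {u v : ℤ × ℤ} (h : (graphOf S).Adj u v) :
    v.2 ≤ u.2 + 1 := by
  rcases graphOf_adj_cases h with h | h | h | h <;> omega

def edgeBoundary (I : Finset (ℤ × ℤ)) : Finset LatticeEdge :=
  (I.biUnion fun p => {horizEdge p, vertEdge p, horizEdge (p.1 - 1, p.2), vertEdge (p.1, p.2 - 1)})
    |>.filter fun e => ¬(e.fst ∈ I ↔ e.snd ∈ I)

lemma mem_edgeBoundary {I : Finset (ℤ × ℤ)} {e : LatticeEdge} :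
    e ∈ edgeBoundary I ↔ ¬(e.fst ∈ I ↔ e.snd ∈ I) := by
  refine ⟨fun h => (mem_filter.1 h).2, fun h => mem_filter.2 ⟨?_, h⟩⟩
  rw [mem_biUnion]
  by_cases hfst : e.fst ∈ I
  · refine ⟨e.fst, hfst, ?_⟩
    rcases eq_horizEdge_or_eq_vertEdge e with he | he <;> rw [he] <;> simp
  · refine ⟨e.snd, by tauto, ?_⟩
    rcases eq_horizEdge_or_eq_vertEdge e with he | he <;> rw [he] <;> simp

noncomputable def row (I : Finset (ℤ × ℤ)) (j : ℤ) : Finset ℤ :=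
  I.preimage (·, j) (Prod.mk_left_injective j).injOn

noncomputable def column (I : Finset (ℤ × ℤ)) (i : ℤ) : Finset ℤ :=
  I.preimage (Prod.mk i) (Prod.mk_right_injective i).injOn

@[simp] lemma mem_row {I : Finset (ℤ × ℤ)} {a j : ℤ} : a ∈ row I j ↔ (a, j) ∈ I :=
  mem_preimage

@[simp] lemma mem_column {I : Finset (ℤ × ℤ)} {i c : ℤ} :
    c ∈ column I i ↔ (i, c) ∈ I :=
  mem_preimage

section NonBoundaryEdges

variable {I : Finset (ℤ × ℤ)} {S : Set LatticeEdge}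

lemma adj_of_not_mem_edgeBoundary (hS : (↑(edgeBoundary I))ᶜ ⊆ S) {e : LatticeEdge}
    (he : e.fst ∈ I ↔ e.snd ∈ I) : (graphOf S).Adj e.fst e.snd :=
  graphOf_adj_of_mem (hS fun h => mem_edgeBoundary.1 h he)

lemma reachable_vert (hS : (↑(edgeBoundary I))ᶜ ⊆ S) {a c d : ℤ} (hcd : c ≤ d)
    (h : ∀ t, c ≤ t → t < d → ((a, t) ∈ I ↔ (a, t + 1) ∈ I)) :
    (graphOf S).Reachable (a, c) (a, d) := by
  induction d, hcd using Int.leInduction with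
  | base => rfl
  | succ n hcn ih =>
    exact (ih fun t h1 h2 => h t h1 (by omega)).trans
      (adj_of_not_mem_edgeBoundary hS (e := vertEdge (a, n)) (h n hcn (by omega))).reachable

lemma reachable_horiz (hS : (↑(edgeBoundary I))ᶜ ⊆ S) {j a b : ℤ} (hab : a ≤ b)
    (h : ∀ t, a ≤ t → t < b → ((t, j) ∈ I ↔ (t + 1, j) ∈ I)) :
    (graphOf S).Reachable (a, j) (b, j) := by
  induction b, hab using Int.leInduction with
  | base => rfl
  | succ n han ih =>
    exact (ih fun t h1 h2 => h t h1 (by omega)).trans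
      (adj_of_not_mem_edgeBoundary hS (e := horizEdge (n, j)) (h n han (by omega))).reachable

lemma supp_infinite_of_not_mem (hS : (↑(edgeBoundary I))ᶜ ⊆ S) {a c : ℤ}
    (hconv : (column I a : Set ℤ).OrdConnected) (hq : (a, c) ∉ I) :
    ((graphOf S).connectedComponentMk (a, c)).supp.Infinite := by
  by_cases hbelow : ∃ t ≤ c, (a, t) ∈ I
  · obtain ⟨t₀, ht₀, hmem⟩ := hbelow
    have habove : ∀ t, c ≤ t → (a, t) ∉ I := fun t ht hmem' =>
      hq (mem_column.1 (hconv.out (mem_column.2 hmem) (mem_column.2 hmem') ⟨ht₀, ht⟩))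
    refine Set.infinite_of_injective_forall_mem (f := fun k : ℕ => (a, c + k))
      (fun k l h => by simpa using h) fun k => mem_supp_connectedComponentMk_iff.2 ?_
    exact (reachable_vert hS (by omega) fun t h1 _ =>
      iff_of_false (habove t h1) (habove _ (by omega))).symm
  · push Not at hbelow
    refine Set.infinite_of_injective_forall_mem (f := fun k : ℕ => (a, c - k))
      (fun k l h => by simpa using h) fun k => mem_supp_connectedComponentMk_iff.2 ?_
    exact reachable_vert hS (by omega) fun t _ h2 =>
      iff_of_false (hbelow t (by omega)) (hbelow _ (by omega))

end NonBoundaryEdges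

/-- A staircase (parallelogram) polyomino from the cell `0` to the cell `x`; the overlap of
consecutive rows makes it connected. -/
structure IsStaircase (x : ℤ × ℤ) (I : Finset (ℤ × ℤ)) : Prop where
  image_fst : I.image Prod.fst = Icc 0 x.1
  image_snd : I.image Prod.snd = Icc 0 x.2
  zero_mem : 0 ∈ I
  mem : x ∈ I
  ordConnected_row : ∀ j, (row I j : Set ℤ).OrdConnected
  ordConnected_column : ∀ i, (column I i : Set ℤ).OrdConnected
  exists_mem_row_succ : ∀ j, 0 ≤ j → j < x.2 → ∃ i, (i, j) ∈ I ∧ (i, j + 1) ∈ I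

lemma reachable_of_mem_row {I : Finset (ℤ × ℤ)} {S : Set LatticeEdge}
    (hS : (↑(edgeBoundary I))ᶜ ⊆ S) {j a b : ℤ} (hrow : (row I j : Set ℤ).OrdConnected)
    (ha : (a, j) ∈ I) (hb : (b, j) ∈ I) : (graphOf S).Reachable (a, j) (b, j) := by
  wlog hab : a ≤ b generalizing a b
  · exact (this hb ha (by omega)).symm
  have hIcc : ∀ t, a ≤ t → t ≤ b → (t, j) ∈ I := fun t h1 h2 =>
    mem_row.1 (hrow.out (mem_row.2 ha) (mem_row.2 hb) ⟨h1, h2⟩)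
  exact reachable_horiz hS hab fun t h1 h2 =>
    iff_of_true (hIcc t h1 h2.le) (hIcc _ (by omega) (by omega))

lemma mem_of_reachable_complGraph_edgeBoundary {I : Finset (ℤ × ℤ)} {u v : ℤ × ℤ}
    (huv : (complGraph (edgeBoundary I)).Reachable u v) (hu : u ∈ I) : v ∈ I := by
  refine huv.mem_of_forall_adj (fun a b hab ha => ?_) hu
  obtain ⟨e, he, hends⟩ := graphOf_adj_iff.1 hab
  have hiff : e.fst ∈ I ↔ e.snd ∈ I := not_not.1 (mt mem_edgeBoundary.2 he)
  rcases hends with ⟨rfl, rfl⟩ | ⟨rfl, rfl⟩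
  exacts [hiff.1 ha, hiff.2 ha]

namespace IsStaircase

variable {x : ℤ × ℤ} {I : Finset (ℤ × ℤ)}

lemma bounds (h : IsStaircase x I) {p : ℤ × ℤ} (hp : p ∈ I) :
    0 ≤ p.1 ∧ p.1 ≤ x.1 ∧ 0 ≤ p.2 ∧ p.2 ≤ x.2 := by
  have h1 : p.1 ∈ Icc 0 x.1 := h.image_fst ▸ mem_image_of_mem Prod.fst hp
  have h2 : p.2 ∈ Icc 0 x.2 := h.image_snd ▸ mem_image_of_mem Prod.snd hp
  rw [mem_Icc] at h1 h2
  exact ⟨h1.1, h1.2, h2.1, h2.2⟩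

lemma reachable_zero (h : IsStaircase x I) {S : Set LatticeEdge}
    (hS : (↑(edgeBoundary I))ᶜ ⊆ S) {p : ℤ × ℤ} (hp : p ∈ I) :
    (graphOf S).Reachable 0 p := by
  obtain ⟨a, j⟩ := p
  have hj : 0 ≤ j := (h.bounds hp).2.2.1
  induction j, hj using Int.leInduction generalizing a with
  | base => exact reachable_of_mem_row hS (h.ordConnected_row 0) h.zero_mem hp
  | succ n hn ih =>
    obtain ⟨i, hi, hi'⟩ := h.exists_mem_row_succ n hn (by linarith [(h.bounds hp).2.2.2])
    exact ((ih i hi).trans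
      (adj_of_not_mem_edgeBoundary hS (e := vertEdge (i, n)) (iff_of_true hi hi')).reachable).trans
      (reachable_of_mem_row hS (h.ordConnected_row _) hi' hp)

lemma reachable (h : IsStaircase x I) {S : Set LatticeEdge} (hS : (↑(edgeBoundary I))ᶜ ⊆ S)
    {p q : ℤ × ℤ} (hp : p ∈ I) (hq : q ∈ I) : (graphOf S).Reachable p q :=
  (h.reachable_zero hS hp).symm.trans (h.reachable_zero hS hq)

lemma supp_eq (h : IsStaircase x I) {p : ℤ × ℤ} (hp : p ∈ I) :
    ((complGraph (edgeBoundary I)).connectedComponentMk p).supp = I := by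
  ext q
  rw [mem_supp_connectedComponentMk_iff]
  exact ⟨fun hqp => mem_of_reachable_complGraph_edgeBoundary hqp.symm hp,
    fun hq => h.reachable (fun _ he => he) hq hp⟩

lemma isContour (h : IsStaircase x I) : IsContour (edgeBoundary I) := by
  refine ⟨⟨(complGraph (edgeBoundary I)).connectedComponentMk 0, ?_, ?_⟩, ?_⟩
  · simp only [h.supp_eq h.zero_mem, Finset.finite_toSet]
  · intro C hC
    induction C using ConnectedComponent.ind with | h v => ?_
    obtain ⟨a, c⟩ := v
    by_cases hv : (a, c) ∈ I
    · exact ConnectedComponent.sound (h.reachable (fun _ he => he) hv h.zero_mem)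
    · exact absurd hC (supp_infinite_of_not_mem (fun _ he => he) (h.ordConnected_column a) hv)
  · intro e he C hC
    induction C using ConnectedComponent.ind with | h v => ?_
    have hS : (edgeBoundary I : Set LatticeEdge)ᶜ ⊆ {f | f ∉ edgeBoundary I ∨ f = e} :=
      fun _ => Or.inl
    have hadj := graphOf_adj_of_mem (S := {f | f ∉ edgeBoundary I ∨ f = e}) (Or.inr rfl)
    -- a component meeting `I` also meets the outside, across `e`
    obtain ⟨⟨a, c⟩, hw, hvw⟩ :
        ∃ w ∉ I, (graphOf {f | f ∉ edgeBoundary I ∨ f = e}).Reachable v w := by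
      by_cases hv : v ∈ I
      · rw [mem_edgeBoundary] at he
        by_cases hfst : e.fst ∈ I
        · exact ⟨e.snd, by tauto, (h.reachable hS hv hfst).trans hadj.reachable⟩
        · exact ⟨e.fst, hfst, (h.reachable hS hv (by tauto)).trans hadj.symm.reachable⟩
      · exact ⟨v, hv, .rfl⟩
    rw [ConnectedComponent.sound hvw] at hC
    exact supp_infinite_of_not_mem hS (h.ordConnected_column a) hw hC

lemma surrounds (h : IsStaircase x I) : Surrounds (edgeBoundary I) {0, x} := by
  refine ⟨h.isContour, (complGraph (edgeBoundary I)).connectedComponentMk 0, ?_, ?_⟩ <;>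
    rw [h.supp_eq h.zero_mem]
  · exact I.finite_toSet
  · simp [Set.insert_subset_iff, h.zero_mem, h.mem]

end IsStaircase

lemma injOn_edgeBoundary (x : ℤ × ℤ) : Set.InjOn edgeBoundary {I | IsStaircase x I} := by
  intro I hI J hJ hIJ
  have hsupp := hI.supp_eq hI.zero_mem
  rw [hIJ, hJ.supp_eq hJ.zero_mem] at hsupp
  exact_mod_cast hsupp.symm

def intBoundary (S : Finset ℤ) : Finset ℤ :=
  (S ∪ S.image (· - 1)).filter fun c => ¬(c ∈ S ↔ c + 1 ∈ S)

section IntBoundary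

variable {S : Finset ℤ}

lemma mem_intBoundary {c : ℤ} : c ∈ intBoundary S ↔ ¬(c ∈ S ↔ c + 1 ∈ S) := by
  refine ⟨fun h => (mem_filter.1 h).2, fun h => mem_filter.2 ⟨?_, h⟩⟩
  by_cases hc : c ∈ S
  · exact mem_union_left _ hc
  · exact mem_union_right _ (mem_image.2 ⟨c + 1, by tauto, by simp⟩)

lemma min'_sub_one_mem_intBoundary (hS : S.Nonempty) : S.min' hS - 1 ∈ intBoundary S := by
  have := S.min'_le (S.min' hS - 1)
  rw [mem_intBoundary, sub_add_cancel]
  exact fun h => by linarith [this (h.2 (S.min'_mem hS))]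

lemma max'_mem_intBoundary (hS : S.Nonempty) : S.max' hS ∈ intBoundary S := by
  have := S.le_max' (S.max' hS + 1)
  rw [mem_intBoundary]
  exact fun h => by linarith [this (h.1 (S.max'_mem hS))]

lemma two_le_card_intBoundary (hS : S.Nonempty) : 2 ≤ #(intBoundary S) := by
  have hne : S.min' hS - 1 ≠ S.max' hS := by linarith [S.min'_le_max' hS]
  rw [← card_pair hne]
  exact card_le_card (insert_subset (min'_sub_one_mem_intBoundary hS)
    (singleton_subset_iff.2 (max'_mem_intBoundary hS)))

lemma ordConnected_of_card_intBoundary_le_two (hcard : #(intBoundary S) ≤ 2) :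
    (S : Set ℤ).OrdConnected := by
  -- a gap `g` in `S` puts the last element of `S` below `g` into the boundary as well
  refine ⟨fun a ha b hb g ⟨hag, hgb⟩ => by_contra fun hg => ?_⟩
  rw [mem_coe] at ha hb hg
  have hS : S.Nonempty := ⟨a, ha⟩
  have hT : (S.filter (· < g)).Nonempty :=
    ⟨a, mem_filter.2 ⟨ha, lt_of_le_of_ne hag (by grind)⟩⟩
  set c := (S.filter (· < g)).max' hT
  have hc := mem_filter.1 ((S.filter (· < g)).max'_mem hT)
  have hc1 : c + 1 ∉ S := fun h1 => by
    rcases (Int.add_one_le_iff.2 hc.2).lt_or_eq with hlt | heq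
    · linarith [(S.filter (· < g)).le_max' _ (mem_filter.2 ⟨h1, hlt⟩)]
    · exact hg (heq ▸ h1)
  have hcB : c ∈ intBoundary S := mem_intBoundary.2 fun h => hc1 (h.1 hc.1)
  have h1 : S.min' hS - 1 < c := by linarith [S.min'_le c hc.1]
  have h2 : c < S.max' hS := by linarith [S.le_max' b hb, hc.2]
  have hsub : {S.min' hS - 1, c, S.max' hS} ⊆ intBoundary S := by
    simp only [insert_subset_iff, singleton_subset_iff]
    exact ⟨min'_sub_one_mem_intBoundary hS, hcB, max'_mem_intBoundary hS⟩
  have := card_le_card hsub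
  rw [card_insert_of_notMem (by simp; omega), card_pair (by omega)] at this
  omega

lemma card_intBoundary_eq_two (hS : S.Nonempty) (hconv : (S : Set ℤ).OrdConnected) :
    #(intBoundary S) = 2 := by
  have hmin := S.min'_mem hS
  have hmax := S.max'_mem hS
  have hIcc : ∀ t, S.min' hS ≤ t → t ≤ S.max' hS → t ∈ S := fun t h1 h2 =>
    mem_coe.1 (hconv.out (mem_coe.2 hmin) (mem_coe.2 hmax) ⟨h1, h2⟩)
  have hB : intBoundary S = {S.min' hS - 1, S.max' hS} := by
    ext c
    simp only [mem_intBoundary, mem_insert, mem_singleton]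
    constructor
    · intro h
      by_contra! hc
      by_cases h0 : c ∈ S
      · have := S.le_max' c h0
        exact h (iff_of_true h0 (hIcc _ (by linarith [S.min'_le c h0]) (by omega)))
      · have h1 : c + 1 ∈ S := by tauto
        have := S.min'_le _ h1
        exact h0 (hIcc c (by omega) (by linarith [S.le_max' _ h1]))
    · rintro (rfl | rfl)
      · rw [sub_add_cancel]
        exact fun h => by linarith [S.min'_le _ (h.2 hmin)]
      · exact fun h => by linarith [S.le_max' _ (h.1 hmax)]
  rw [hB, card_pair (by linarith [S.min'_le_max' hS])]

end IntBoundary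

lemma filter_horiz_edgeBoundary (I : Finset (ℤ × ℤ)) (j : ℤ) :
    (edgeBoundary I).filter (fun e => e.horiz = true ∧ e.base.2 = j) =
      (intBoundary (row I j)).map
        ⟨fun c => horizEdge (c, j), fun a b h => by simpa [horizEdge] using h⟩ := by
  ext ⟨⟨a, b⟩, _ | _⟩ <;>
    simp [mem_edgeBoundary, mem_intBoundary, horizEdge, LatticeEdge.fst, LatticeEdge.snd]
  exact ⟨fun ⟨h, hb⟩ => ⟨hb ▸ h, hb.symm⟩, fun ⟨h, hb⟩ => ⟨hb ▸ h, hb.symm⟩⟩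

lemma filter_vert_edgeBoundary (I : Finset (ℤ × ℤ)) (i : ℤ) :
    (edgeBoundary I).filter (fun e => ¬e.horiz = true ∧ e.base.1 = i) =
      (intBoundary (column I i)).map
        ⟨fun c => vertEdge (i, c), fun a b h => by simpa [vertEdge] using h⟩ := by
  ext ⟨⟨a, b⟩, _ | _⟩ <;>
    simp [mem_edgeBoundary, mem_intBoundary, vertEdge, LatticeEdge.fst, LatticeEdge.snd]
  exact ⟨fun ⟨h, hb⟩ => ⟨hb ▸ h, hb.symm⟩, fun ⟨h, hb⟩ => ⟨hb ▸ h, hb.symm⟩⟩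

lemma card_edgeBoundary (I : Finset (ℤ × ℤ)) :
    #(edgeBoundary I) = ∑ j ∈ I.image Prod.snd, #(intBoundary (row I j)) +
      ∑ i ∈ I.image Prod.fst, #(intBoundary (column I i)) := by
  rw [← card_filter_add_card_filter_not (s := edgeBoundary I) (fun e => e.horiz = true)]
  congr 1
  · rw [card_eq_sum_card_fiberwise (f := fun e => e.base.2) (t := I.image Prod.snd)]
    · refine sum_congr rfl fun j _ => ?_
      rw [filter_filter, filter_horiz_edgeBoundary, card_map]
    · rintro ⟨⟨a, b⟩, _ | _⟩ he <;>
        simp [mem_edgeBoundary, LatticeEdge.fst, LatticeEdge.snd] at he ⊢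
      by_cases h : (a, b) ∈ I
      exacts [⟨_, h⟩, ⟨a + 1, by tauto⟩]
  · rw [card_eq_sum_card_fiberwise (f := fun e => e.base.1) (t := I.image Prod.fst)]
    · refine sum_congr rfl fun i _ => ?_
      rw [filter_filter, filter_vert_edgeBoundary, card_map]
    · rintro ⟨⟨a, b⟩, _ | _⟩ he <;>
        simp [mem_edgeBoundary, LatticeEdge.fst, LatticeEdge.snd] at he ⊢
      by_cases h : (a, b) ∈ I
      exacts [⟨_, h⟩, ⟨b + 1, by tauto⟩]

lemma row_nonempty {I : Finset (ℤ × ℤ)} {j : ℤ} (hj : j ∈ I.image Prod.snd) :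
    (row I j).Nonempty := by
  obtain ⟨⟨a, b⟩, hp, rfl⟩ := mem_image.1 hj
  exact ⟨a, mem_row.2 hp⟩

lemma column_nonempty {I : Finset (ℤ × ℤ)} {i : ℤ} (hi : i ∈ I.image Prod.fst) :
    (column I i).Nonempty := by
  obtain ⟨⟨a, b⟩, hp, rfl⟩ := mem_image.1 hi
  exact ⟨b, mem_column.2 hp⟩

lemma IsStaircase.edgeBoundary_mem_gammaN {x : ℤ × ℤ} {I : Finset (ℤ × ℤ)}
    (h : IsStaircase x I) : edgeBoundary I ∈ GammaN {0, x} (normC x) := by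
  refine ⟨h.surrounds, ?_⟩
  rw [card_edgeBoundary,
    sum_congr rfl fun j hj => card_intBoundary_eq_two (row_nonempty hj) (h.ordConnected_row j),
    sum_congr rfl fun i hi =>
      card_intBoundary_eq_two (column_nonempty hi) (h.ordConnected_column i),
    sum_const, sum_const, h.image_fst, h.image_snd, Int.card_Icc, Int.card_Icc, normC, smul_eq_mul,
    smul_eq_mul]
  have := h.bounds h.mem
  omega

lemma eq_edgeBoundary_of_isContour {γ : Finset LatticeEdge} (hγ : IsContour γ)
    {C : (complGraph γ).ConnectedComponent} (hC : C.supp.Finite) :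
    γ = edgeBoundary hC.toFinset := by
  have hmem : ∀ p, p ∈ hC.toFinset ↔ p ∈ C.supp := fun _ => hC.mem_toFinset
  refine Subset.antisymm (fun e he => ?_) (fun e he => ?_)
  · -- otherwise `C` would survive as a finite component after putting `e` back
    rw [mem_edgeBoundary, hmem, hmem]
    intro hiff
    obtain ⟨v, hv⟩ := C.nonempty_supp
    refine hγ.2 e he (connectedComponentMk _ v) (hC.subset fun q hq => ?_)
    refine (mem_supp_connectedComponentMk_iff.1 hq).symm.mem_of_forall_adj (fun a b hab ha => ?_) hv
    obtain ⟨f, hf | rfl, hends⟩ := graphOf_adj_iff.1 hab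
    · exact C.mem_supp_of_adj_mem_supp ha (graphOf_adj_iff.2 ⟨f, hf, hends⟩)
    · rcases hends with ⟨rfl, rfl⟩ | ⟨rfl, rfl⟩
      exacts [hiff.1 ha, hiff.2 ha]
  · by_contra heγ
    have hadj : (complGraph γ).Adj e.fst e.snd := graphOf_adj_of_mem heγ
    rw [mem_edgeBoundary, hmem, hmem] at he
    exact he ⟨fun h => C.mem_supp_of_adj_mem_supp h hadj,
      fun h => C.mem_supp_of_adj_mem_supp h hadj.symm⟩

section Walk

variable {S : Set LatticeEdge} {I : Finset (ℤ × ℤ)} {u v : ℤ × ℤ}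
  (w : (graphOf S).Walk u v)

lemma Icc_subset_image_fst_of_walk (hw : ∀ r ∈ w.support, r ∈ I) :
    Icc u.1 v.1 ⊆ I.image Prod.fst := by
  intro k hk
  rw [mem_Icc] at hk
  rcases hk.2.lt_or_eq with hlt | rfl
  · obtain ⟨d, hd, hk, -⟩ := w.exists_mem_darts_of_le_of_lt Prod.fst
      (fun _ _ => fst_le_add_one_of_adj) hk.1 hlt
    exact mem_image.2 ⟨d.fst, hw _ (w.dart_fst_mem_support_of_mem_darts hd), hk⟩
  · exact mem_image_of_mem _ (hw _ w.end_mem_support)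

lemma Icc_subset_image_snd_of_walk (hw : ∀ r ∈ w.support, r ∈ I) :
    Icc u.2 v.2 ⊆ I.image Prod.snd := by
  intro k hk
  rw [mem_Icc] at hk
  rcases hk.2.lt_or_eq with hlt | rfl
  · obtain ⟨d, hd, hk, -⟩ := w.exists_mem_darts_of_le_of_lt Prod.snd
      (fun _ _ => snd_le_add_one_of_adj) hk.1 hlt
    exact mem_image.2 ⟨d.fst, hw _ (w.dart_fst_mem_support_of_mem_darts hd), hk⟩
  · exact mem_image_of_mem _ (hw _ w.end_mem_support)

lemma exists_mem_row_succ_of_walk (hw : ∀ r ∈ w.support, r ∈ I) {j : ℤ} (h₁ : u.2 ≤ j)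
    (h₂ : j < v.2) : ∃ i, (i, j) ∈ I ∧ (i, j + 1) ∈ I := by
  obtain ⟨d, hd, hj, hj'⟩ := w.exists_mem_darts_of_le_of_lt Prod.snd
    (fun _ _ => snd_le_add_one_of_adj) h₁ h₂
  have hi : d.snd.1 = d.fst.1 := by rcases graphOf_adj_cases d.adj with h | h | h | h <;> omega
  refine ⟨d.fst.1, ?_, ?_⟩
  · convert hw _ (w.dart_fst_mem_support_of_mem_darts hd)
    exact hj.symm
  · convert hw _ (w.dart_snd_mem_support_of_mem_darts hd) using 2
    exacts [hi.symm, hj'.symm]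

end Walk

lemma two_mul_card_image_snd_le (I : Finset (ℤ × ℤ)) :
    2 * #(I.image Prod.snd) ≤ ∑ j ∈ I.image Prod.snd, #(intBoundary (row I j)) := by
  simpa [mul_comm] using
    card_nsmul_le_sum _ _ 2 fun j hj => two_le_card_intBoundary (row_nonempty hj)

lemma two_mul_card_image_fst_le (I : Finset (ℤ × ℤ)) :
    2 * #(I.image Prod.fst) ≤ ∑ i ∈ I.image Prod.fst, #(intBoundary (column I i)) := by
  simpa [mul_comm] using
    card_nsmul_le_sum _ _ 2 fun i hi => two_le_card_intBoundary (column_nonempty hi)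

lemma isStaircase_of_card_edgeBoundary_le {x : ℤ × ℤ} {I : Finset (ℤ × ℤ)} (hx : 0 ≤ x)
    (h0 : 0 ∈ I) (hxI : x ∈ I) (hfst : Icc 0 x.1 ⊆ I.image Prod.fst)
    (hsnd : Icc 0 x.2 ⊆ I.image Prod.snd)
    (hrow : ∀ j, 0 ≤ j → j < x.2 → ∃ i, (i, j) ∈ I ∧ (i, j + 1) ∈ I)
    (hcard : #(edgeBoundary I) ≤ normC x) : IsStaircase x I := by
  have hR := two_mul_card_image_snd_le I
  have hC := two_mul_card_image_fst_le I
  have hR' := card_le_card hsnd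
  have hC' := card_le_card hfst
  rw [Int.card_Icc] at hR' hC'
  rw [card_edgeBoundary, normC] at hcard
  obtain ⟨hx₁, hx₂⟩ := Prod.le_def.1 hx
  have hRsum :
      ∑ j ∈ I.image Prod.snd, #(intBoundary (row I j)) = ∑ j ∈ I.image Prod.snd, 2 := by
    rw [sum_const, smul_eq_mul]; omega
  have hCsum :
      ∑ i ∈ I.image Prod.fst, #(intBoundary (column I i)) = ∑ i ∈ I.image Prod.fst, 2 := by
    rw [sum_const, smul_eq_mul]; omega
  have hR2 := (sum_eq_sum_iff_of_le fun j hj =>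
    (two_le_card_intBoundary (row_nonempty hj))).1 hRsum.symm
  have hC2 := (sum_eq_sum_iff_of_le fun i hi =>
    (two_le_card_intBoundary (column_nonempty hi))).1 hCsum.symm
  refine ⟨(eq_of_subset_of_card_le hfst (by rw [Int.card_Icc]; omega)).symm,
    (eq_of_subset_of_card_le hsnd (by rw [Int.card_Icc]; omega)).symm, h0, hxI,
    fun j => ?_, fun i => ?_, hrow⟩
  · by_cases hj : j ∈ I.image Prod.snd
    · exact ordConnected_of_card_intBoundary_le_two (hR2 j hj).ge
    · convert Set.ordConnected_empty
      ext a
      simpa using fun ha => hj (mem_image.2 ⟨(a, j), ha, rfl⟩)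
  · by_cases hi : i ∈ I.image Prod.fst
    · exact ordConnected_of_card_intBoundary_le_two (hC2 i hi).ge
    · convert Set.ordConnected_empty
      ext a
      simpa using fun ha => hi (mem_image.2 ⟨(i, a), ha, rfl⟩)

lemma exists_isStaircase_of_mem_gammaN {x : ℤ × ℤ} (hx : 0 ≤ x) {γ : Finset LatticeEdge}
    (hγ : γ ∈ GammaN {0, x} (normC x)) : ∃ I, IsStaircase x I ∧ γ = edgeBoundary I := by
  obtain ⟨⟨hcont, C, hC, hsub⟩, hcard⟩ := hγ
  have h0 : 0 ∈ C.supp := hsub (by simp)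
  have hxC : x ∈ C.supp := hsub (by simp)
  obtain ⟨w⟩ := C.reachable_of_mem_supp h0 hxC
  have hw : ∀ r ∈ w.support, r ∈ hC.toFinset := fun r hr =>
    hC.mem_toFinset.2 (C.mem_supp_iff r |>.2 <|
      (ConnectedComponent.sound ⟨w.takeUntil r hr⟩).symm.trans ((C.mem_supp_iff 0).1 h0))
  have hγI := eq_edgeBoundary_of_isContour hcont hC
  have hfst : Icc 0 x.1 ⊆ hC.toFinset.image Prod.fst := by
    simpa using Icc_subset_image_fst_of_walk w hw
  have hsnd : Icc 0 x.2 ⊆ hC.toFinset.image Prod.snd := by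
    simpa using Icc_subset_image_snd_of_walk w hw
  have hcard' : #(edgeBoundary hC.toFinset) ≤ normC x := by rw [← hγI, hcard]
  refine ⟨_, isStaircase_of_card_edgeBoundary_le hx (hC.mem_toFinset.2 h0)
    (hC.mem_toFinset.2 hxC) hfst hsnd
    (fun j h₁ h₂ => exists_mem_row_succ_of_walk w hw (by simpa using h₁) h₂) hcard', hγI⟩

lemma gammaN_eq_image_edgeBoundary {x : ℤ × ℤ} (hx : 0 ≤ x) :
    GammaN {0, x} (normC x) = edgeBoundary '' {I | IsStaircase x I} := by
  ext γ
  refine ⟨fun hγ => ?_, ?_⟩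
  · obtain ⟨I, hI, rfl⟩ := exists_isStaircase_of_mem_gammaN hx hγ
    exact ⟨I, hI, rfl⟩
  · rintro ⟨I, hI, rfl⟩
    exact hI.edgeBoundary_mem_gammaN

lemma betaX_eq_card_isStaircase {x : ℤ × ℤ} (hx : 0 ≤ x) :
    betaX x = Nat.card {I | IsStaircase x I} := by
  rw [betaX, gammaN_eq_image_edgeBoundary hx, Nat.card_image_of_injOn (injOn_edgeBoundary x)]

lemma finite_setOf_isStaircase (x : ℤ × ℤ) : {I | IsStaircase x I}.Finite := by
  refine (Icc 0 x).powerset.finite_toSet.subset fun I hI => mem_powerset.2 fun p hp => ?_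
  have := hI.bounds hp
  rw [mem_Icc, Prod.le_def, Prod.le_def]
  exact ⟨⟨this.1, this.2.2.1⟩, this.2.1, this.2.2.2⟩

def translate (x : ℤ × ℤ) (K : Finset (ℤ × ℤ)) : Finset (ℤ × ℤ) :=
  K.map (Equiv.addLeft x).toEmbedding

@[simp] lemma mem_translate {x p : ℤ × ℤ} {K : Finset (ℤ × ℤ)} :
    p ∈ translate x K ↔ p - x ∈ K := by
  simp [translate, mem_map_equiv, sub_eq_neg_add]

lemma translate_injective (x : ℤ × ℤ) : Function.Injective (translate x) :=
  map_injective _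

lemma image_fst_translate (x : ℤ × ℤ) (K : Finset (ℤ × ℤ)) :
    (translate x K).image Prod.fst = (K.image Prod.fst).image (x.1 + ·) := by
  rw [translate, map_eq_image, image_image, image_image]
  rfl

lemma image_snd_translate (x : ℤ × ℤ) (K : Finset (ℤ × ℤ)) :
    (translate x K).image Prod.snd = (K.image Prod.snd).image (x.2 + ·) := by
  rw [translate, map_eq_image, image_image, image_image]
  rfl

lemma Icc_union_Icc_add {a b : ℤ} (ha : 0 ≤ a) (hb : 0 ≤ b) :
    Icc 0 a ∪ (Icc 0 b).image (a + ·) = Icc 0 (a + b) := by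
  rw [image_add_left_Icc, add_zero]
  ext c
  simp only [mem_union, mem_Icc]
  omega

namespace IsStaircase

variable {x y : ℤ × ℤ} {I K : Finset (ℤ × ℤ)}

lemma ordConnected_row_glue (h : IsStaircase x I) (h' : IsStaircase y K) (j : ℤ) :
    (row (I ∪ translate x K) j : Set ℤ).OrdConnected := by
  refine ⟨fun a ha b hb c ⟨hac, hcb⟩ => ?_⟩
  obtain ⟨x₁, x₂⟩ := x
  simp only [mem_coe, mem_row, mem_union, mem_translate, Prod.mk_sub_mk] at ha hb ⊢
  rcases ha with ha | ha <;> rcases hb with hb | hb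
  · exact .inl (mem_row.1 ((h.ordConnected_row j).out (mem_row.2 ha) (mem_row.2 hb) ⟨hac, hcb⟩))
  · obtain rfl : j = x₂ := by linarith [h.bounds ha, h'.bounds hb]
    by_cases hcx : c ≤ x₁
    · exact .inl (mem_row.1 ((h.ordConnected_row j).out (mem_row.2 ha) (mem_row.2 h.mem)
        ⟨hac, hcx⟩))
    · have h0 : (0, j - j) ∈ K := by rw [sub_self]; exact h'.zero_mem
      exact .inr (mem_row.1 ((h'.ordConnected_row _).out (mem_row.2 h0) (mem_row.2 hb)
        ⟨by omega, by omega⟩))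
  · obtain ⟨rfl, rfl⟩ : c = x₁ ∧ j = x₂ := by
      have := h.bounds hb; have := h'.bounds ha; omega
    exact .inl h.mem
  · exact .inr (mem_row.1 ((h'.ordConnected_row _).out (mem_row.2 ha) (mem_row.2 hb)
      ⟨by omega, by omega⟩))

lemma ordConnected_column_glue (h : IsStaircase x I) (h' : IsStaircase y K) (i : ℤ) :
    (column (I ∪ translate x K) i : Set ℤ).OrdConnected := by
  refine ⟨fun a ha b hb c ⟨hac, hcb⟩ => ?_⟩
  obtain ⟨x₁, x₂⟩ := x
  simp only [mem_coe, mem_column, mem_union, mem_translate, Prod.mk_sub_mk] at ha hb ⊢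
  rcases ha with ha | ha <;> rcases hb with hb | hb
  · exact .inl (mem_column.1 ((h.ordConnected_column i).out (mem_column.2 ha) (mem_column.2 hb)
      ⟨hac, hcb⟩))
  · obtain rfl : i = x₁ := by linarith [h.bounds ha, h'.bounds hb]
    by_cases hcx : c ≤ x₂
    · exact .inl (mem_column.1 ((h.ordConnected_column i).out (mem_column.2 ha)
        (mem_column.2 h.mem) ⟨hac, hcx⟩))
    · have h0 : (i - i, 0) ∈ K := by rw [sub_self]; exact h'.zero_mem
      exact .inr (mem_column.1 ((h'.ordConnected_column _).out (mem_column.2 h0)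
        (mem_column.2 hb) ⟨by omega, by omega⟩))
  · obtain ⟨rfl, rfl⟩ : i = x₁ ∧ c = x₂ := by
      have := h.bounds hb; have := h'.bounds ha; omega
    exact .inl h.mem
  · exact .inr (mem_column.1 ((h'.ordConnected_column _).out (mem_column.2 ha) (mem_column.2 hb)
      ⟨by omega, by omega⟩))

lemma exists_mem_row_succ_glue (h : IsStaircase x I) (h' : IsStaircase y K) {j : ℤ} (hj₁ : 0 ≤ j)
    (hj₂ : j < (x + y).2) :
    ∃ i, (i, j) ∈ I ∪ translate x K ∧ (i, j + 1) ∈ I ∪ translate x K := by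
  obtain ⟨x₁, x₂⟩ := x
  simp only [mem_union, mem_translate, Prod.mk_sub_mk]
  by_cases hj : j < x₂
  · obtain ⟨i, hi, hi'⟩ := h.exists_mem_row_succ j hj₁ hj
    exact ⟨i, .inl hi, .inl hi'⟩
  · obtain ⟨i, hi, hi'⟩ := h'.exists_mem_row_succ (j - x₂) (by omega) (by simp at hj₂; omega)
    refine ⟨i + x₁, .inr ?_, .inr ?_⟩
    · simpa using hi
    · simpa [sub_add_eq_add_sub] using hi'

lemma glue (h : IsStaircase x I) (h' : IsStaircase y K) :
    IsStaircase (x + y) (I ∪ translate x K) := by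
  have hx := h.bounds h.mem
  have hy := h'.bounds h'.mem
  refine ⟨?_, ?_, mem_union_left _ h.zero_mem, ?_, h.ordConnected_row_glue h',
    h.ordConnected_column_glue h', fun j hj₁ hj₂ => h.exists_mem_row_succ_glue h' hj₁ hj₂⟩
  · rw [image_union, image_fst_translate, h.image_fst, h'.image_fst, Icc_union_Icc_add hx.1 hy.1]
    rfl
  · rw [image_union, image_snd_translate, h.image_snd, h'.image_snd,
      Icc_union_Icc_add hx.2.2.1 hy.2.2.1]
    rfl
  · exact mem_union_right _ (mem_translate.2 (by rw [add_sub_cancel_left]; exact h'.mem))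

lemma filter_le_glue (h : IsStaircase x I) (h' : IsStaircase y K) :
    (I ∪ translate x K).filter (· ≤ x) = I := by
  ext p
  simp only [mem_filter, mem_union, mem_translate]
  refine ⟨fun ⟨hp, hpx⟩ => hp.elim id fun hp => ?_, fun hp => ⟨.inl hp, ?_⟩⟩
  · obtain rfl : p = x := by
      have := h'.bounds hp
      rw [Prod.le_def] at hpx
      simp only [Prod.fst_sub, Prod.snd_sub] at this
      exact Prod.ext (by omega) (by omega)
    exact h.mem
  · have := h.bounds hp
    exact Prod.le_def.2 ⟨this.2.1, this.2.2.2⟩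

lemma filter_ge_glue (h : IsStaircase x I) (h' : IsStaircase y K) :
    (I ∪ translate x K).filter (x ≤ ·) = translate x K := by
  ext p
  simp only [mem_filter, mem_union, mem_translate]
  refine ⟨fun ⟨hp, hxp⟩ => hp.elim (fun hp => ?_) id, fun hp => ⟨.inr hp, ?_⟩⟩
  · obtain rfl : p = x := by
      have := h.bounds hp
      rw [Prod.le_def] at hxp
      exact Prod.ext (by omega) (by omega)
    simpa using h'.zero_mem
  · have := h'.bounds hp
    simp only [Prod.fst_sub, Prod.snd_sub] at this
    exact Prod.le_def.2 ⟨by omega, by omega⟩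

end IsStaircase

theorem betaX_mul_le_betaX_add {x y : ℤ × ℤ} (hx : 0 ≤ x) (hy : 0 ≤ y) :
    betaX x * betaX y ≤ betaX (x + y) := by
  rw [betaX_eq_card_isStaircase hx, betaX_eq_card_isStaircase hy,
    betaX_eq_card_isStaircase (add_nonneg hx hy), ← Nat.card_prod]
  have := (finite_setOf_isStaircase (x + y)).to_subtype
  refine Nat.card_le_card_of_injective
    (fun p => ⟨p.1.1 ∪ translate x p.2.1, p.1.2.glue p.2.2⟩) ?_
  rintro ⟨⟨I, hI⟩, ⟨K, hK⟩⟩ ⟨⟨I', hI'⟩, ⟨K', hK'⟩⟩ h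
  have h : I ∪ translate x K = I' ∪ translate x K' := congrArg Subtype.val h
  simp only [Prod.mk.injEq, Subtype.mk.injEq]
  exact ⟨by rw [← hI.filter_le_glue hK, h, hI'.filter_le_glue hK'],
    translate_injective x (by rw [← hI.filter_ge_glue hK, h, hI'.filter_ge_glue hK'])⟩

end MinimalContour

theorem betaX_supermultiplicative_general (ρ : ℕ)
    (n m : ℕ) :
    betaX ((n : ℤ), ((ρ * n : ℕ) : ℤ)) * betaX ((m : ℤ), ((ρ * m : ℕ) : ℤ)) ≤
      betaX (((n + m : ℕ) : ℤ), ((ρ * (n + m) : ℕ) : ℤ)) := by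
  convert MinimalContour.betaX_mul_le_betaX_add (x := ((n : ℤ), ((ρ * n : ℕ) : ℤ)))
    (y := ((m : ℤ), ((ρ * m : ℕ) : ℤ))) ⟨by positivity, by positivity⟩
    ⟨by positivity, by positivity⟩ using 2
  ext <;> simp [mul_add]

/-- For a fixed positive integer `ρ`, the sequence
`α_n = β_{(n, ρn)}` is supermultiplicative: `α_{n+m} ≥ α_n ⬝ α_m`. -/
theorem betaX_supermultiplicative (ρ : ℕ) (hρ : 1 ≤ ρ)
    (n m : ℕ) (hn : 1 ≤ n) (hm : 1 ≤ m) :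
    betaX ((n : ℤ), ((ρ * n : ℕ) : ℤ)) * betaX ((m : ℤ), ((ρ * m : ℕ) : ℤ)) ≤
      betaX (((n + m : ℕ) : ℤ), ((ρ * (n + m) : ℕ) : ℤ)) :=
  betaX_supermultiplicative_general ρ n m
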